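/- Let α > −1/2 and χ ≥ 0 be real, τ > 1, t := −iτ, ν := τ/2 − (χ+α)·ln τ, and g(z) := r(z)/4 − (iχ/τ)·Log D(z) for z ∈ ℂ∖[−1,1]. Then for every x ∈ (0,1) the boundary values g₊(x) := lim_{ε→0⁺} g(x+iε) and g₋(x) := lim_{ε→0⁺} g(x−iε) exist, they satisfy t·(g₊(x) − g₋(x)) = (τ/2)·√(1−x²) − 2χ·ln( x/(1−√(1−x²)) ), and consequently e^{−ν}·exp( t(g₊(x)−g₋(x)) ) = exp( −(τ/2)(1−√(1−x²)) ) · τ^{χ+α} · ( x/(1−√(1−x²)) )^{−2χ}. Moreover x/(1−√(1−x²)) ≥ 1 for all x ∈ (0,1), so for every δ ∈ (0,1), sup_{x∈[δ,1)} e^{−ν}·exp( t(g₊(x)−g₋(x)) ) ≤ τ^{χ+α}·exp( −(τ/2)(1−√(1−δ²)) ), which tends to 0 as τ → +∞. -/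

import Mathlib

open Complex Filter Set Topology

/-- Principal branch of √(z²−1), holomorphic on ℂ∖[−1,1]. -/
noncomputable def rr (z : ℂ) : ℂ :=
  Complex.exp ((1 / 2 : ℂ) * Complex.log (z - 1)) *
    Complex.exp ((1 / 2 : ℂ) * Complex.log (z + 1))

/-- D(z) = z/(1 + i√(z²−1)). -/
noncomputable def DD (z : ℂ) : ℂ := z / (1 + Complex.I * rr z)

/-- The g-function g(z) = √(z²−1)/4 − (iχ/τ)·Log D(z) (with t = −iτ, so χ/t = iχ/τ). -/
noncomputable def gg (χ τ : ℝ) (z : ℂ) : ℂ :=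
  rr z / 4 - (Complex.I * (χ : ℂ) / (τ : ℂ)) * Complex.log (DD z)

lemma exp_half_log (a : ℝ) (ha : 0 < a) :
    Complex.exp ((1/2 : ℂ) * (Real.log a : ℂ)) = (Real.sqrt a : ℂ) := by
  have h : Real.sqrt a = Real.exp (Real.log a / 2) := by
    rw [Real.sqrt_eq_rpow, Real.rpow_def_of_pos ha]; ring_nf
  rw [h, Complex.ofReal_exp]
  norm_num
  push_cast
  ring_nf

lemma exp_half_pi_I : Complex.exp ((1/2 : ℂ) * ((Real.pi : ℂ) * Complex.I)) = Complex.I := by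
  have : (1/2 : ℂ) * ((Real.pi : ℂ) * Complex.I) = (Real.pi/2 : ℂ) * Complex.I := by push_cast; ring
  rw [this, Complex.exp_mul_I]
  push_cast
  rw [Complex.cos_pi_div_two, Complex.sin_pi_div_two]
  ring

lemma exp_neg_half_pi_I : Complex.exp ((1/2 : ℂ) * (-((Real.pi : ℂ) * Complex.I))) = -Complex.I := by
  have : (1/2 : ℂ) * (-((Real.pi : ℂ) * Complex.I)) = (-(Real.pi/2) : ℂ) * Complex.I := by push_cast; ring
  rw [this, Complex.exp_mul_I]
  push_cast
  simp [Complex.cos_neg, Complex.sin_neg, Complex.cos_pi_div_two, Complex.sin_pi_div_two]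

lemma sqrt_mul_sqrt {x : ℝ} (hx0 : 0 < x) (hx1 : x < 1) :
    Real.sqrt (1 - x) * Real.sqrt (1 + x) = Real.sqrt (1 - x^2) := by
  rw [← Real.sqrt_mul (by linarith)]
  ring_nf

lemma rr_tendsto_upper {x : ℝ} (hx0 : 0 < x) (hx1 : x < 1) :
    Tendsto rr (𝓝[{z : ℂ | 0 ≤ z.im}] (x:ℂ))
      (𝓝 (Complex.I * (Real.sqrt (1 - x^2) : ℂ))) := by
  have hS : ∀ z : ℂ, z ∈ {z : ℂ | 0 ≤ z.im} → z - 1 ∈ {z : ℂ | 0 ≤ z.im} := by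
    intro z hz; simpa using hz
  have h1 : Tendsto (fun z : ℂ => z - 1) (𝓝[{z : ℂ | 0 ≤ z.im}] (x:ℂ))
      (𝓝[{z : ℂ | 0 ≤ z.im}] ((x:ℂ) - 1)) := by
    apply tendsto_nhdsWithin_of_tendsto_nhds_of_eventually_within
    · exact (continuous_id.sub continuous_const).continuousWithinAt
    · filter_upwards [eventually_mem_nhdsWithin] using hS
  have hre : ((x:ℂ) - 1).re < 0 := by simp; linarith
  have him : ((x:ℂ) - 1).im = 0 := by simp
  have h2 : Tendsto (fun z : ℂ => Complex.log (z - 1)) (𝓝[{z : ℂ | 0 ≤ z.im}] (x:ℂ))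
      (𝓝 ((Real.log (1 - x) : ℂ) + (Real.pi : ℂ) * Complex.I)) := by
    have := (Complex.tendsto_log_nhdsWithin_im_nonneg_of_re_neg_of_im_zero hre him).comp h1
    have habs : ‖(x:ℂ) - 1‖ = 1 - x := by
      rw [show (x:ℂ) - 1 = ((x - 1 : ℝ) : ℂ) by push_cast; ring, Complex.norm_real, Real.norm_eq_abs]
      rw [abs_of_nonpos (by linarith)]; ring
    rwa [habs] at this
  have h3 : Tendsto (fun z : ℂ => Complex.log (z + 1)) (𝓝[{z : ℂ | 0 ≤ z.im}] (x:ℂ))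
      (𝓝 (Real.log (1 + x) : ℂ)) := by
    have hc : ContinuousAt Complex.log ((x:ℂ) + 1) := by
      apply continuousAt_clog
      apply Complex.mem_slitPlane_iff.2
      left; simp; linarith
    have hadd : Tendsto (fun z : ℂ => z + 1) (𝓝[{z : ℂ | 0 ≤ z.im}] (x:ℂ)) (𝓝 ((x:ℂ) + 1)) :=
      ((continuous_id.add continuous_const).tendsto _).mono_left nhdsWithin_le_nhds
    have : Tendsto (fun z : ℂ => Complex.log (z + 1)) (𝓝[{z : ℂ | 0 ≤ z.im}] (x:ℂ))
        (𝓝 (Complex.log ((x:ℂ) + 1))) := hc.tendsto.comp hadd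
    rwa [show (x:ℂ) + 1 = ((1 + x : ℝ) : ℂ) by push_cast; ring,
      ← Complex.ofReal_log (by linarith)] at this
  have := ((Complex.continuous_exp.continuousAt.tendsto.comp (h2.const_mul (1/2 : ℂ))).mul
    (Complex.continuous_exp.continuousAt.tendsto.comp (h3.const_mul (1/2 : ℂ))))
  have heq : Complex.exp ((1/2 : ℂ) * ((Real.log (1 - x) : ℂ) + (Real.pi : ℂ) * Complex.I)) *
      Complex.exp ((1/2 : ℂ) * (Real.log (1 + x) : ℂ))
      = Complex.I * (Real.sqrt (1 - x^2) : ℂ) := by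
    rw [mul_add, Complex.exp_add, exp_half_log _ (by linarith), exp_half_log _ (by linarith),
      exp_half_pi_I, ← sqrt_mul_sqrt hx0 hx1]
    push_cast; ring
  rw [heq] at this
  exact this.congr (fun z => rfl)

lemma rr_tendsto_lower {x : ℝ} (hx0 : 0 < x) (hx1 : x < 1) :
    Tendsto rr (𝓝[{z : ℂ | z.im < 0}] (x:ℂ))
      (𝓝 (-(Complex.I * (Real.sqrt (1 - x^2) : ℂ)))) := by
  have hS : ∀ z : ℂ, z ∈ {z : ℂ | z.im < 0} → z - 1 ∈ {z : ℂ | z.im < 0} := by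
    intro z hz; simpa using hz
  have h1 : Tendsto (fun z : ℂ => z - 1) (𝓝[{z : ℂ | z.im < 0}] (x:ℂ))
      (𝓝[{z : ℂ | z.im < 0}] ((x:ℂ) - 1)) := by
    apply tendsto_nhdsWithin_of_tendsto_nhds_of_eventually_within
    · exact (continuous_id.sub continuous_const).continuousWithinAt
    · filter_upwards [eventually_mem_nhdsWithin] using hS
  have hre : ((x:ℂ) - 1).re < 0 := by simp; linarith
  have him : ((x:ℂ) - 1).im = 0 := by simp
  have h2 : Tendsto (fun z : ℂ => Complex.log (z - 1)) (𝓝[{z : ℂ | z.im < 0}] (x:ℂ))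
      (𝓝 ((Real.log (1 - x) : ℂ) - (Real.pi : ℂ) * Complex.I)) := by
    have := (Complex.tendsto_log_nhdsWithin_im_neg_of_re_neg_of_im_zero hre him).comp h1
    have habs : ‖(x:ℂ) - 1‖ = 1 - x := by
      rw [show (x:ℂ) - 1 = ((x - 1 : ℝ) : ℂ) by push_cast; ring, Complex.norm_real, Real.norm_eq_abs]
      rw [abs_of_nonpos (by linarith)]; ring
    rwa [habs] at this
  have h3 : Tendsto (fun z : ℂ => Complex.log (z + 1)) (𝓝[{z : ℂ | z.im < 0}] (x:ℂ))
      (𝓝 (Real.log (1 + x) : ℂ)) := by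
    have hc : ContinuousAt Complex.log ((x:ℂ) + 1) := by
      apply continuousAt_clog
      apply Complex.mem_slitPlane_iff.2
      left; simp; linarith
    have hadd : Tendsto (fun z : ℂ => z + 1) (𝓝[{z : ℂ | z.im < 0}] (x:ℂ)) (𝓝 ((x:ℂ) + 1)) :=
      ((continuous_id.add continuous_const).tendsto _).mono_left nhdsWithin_le_nhds
    have : Tendsto (fun z : ℂ => Complex.log (z + 1)) (𝓝[{z : ℂ | z.im < 0}] (x:ℂ))
        (𝓝 (Complex.log ((x:ℂ) + 1))) := hc.tendsto.comp hadd
    rwa [show (x:ℂ) + 1 = ((1 + x : ℝ) : ℂ) by push_cast; ring,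
      ← Complex.ofReal_log (by linarith)] at this
  have := ((Complex.continuous_exp.continuousAt.tendsto.comp (h2.const_mul (1/2 : ℂ))).mul
    (Complex.continuous_exp.continuousAt.tendsto.comp (h3.const_mul (1/2 : ℂ))))
  have heq : Complex.exp ((1/2 : ℂ) * ((Real.log (1 - x) : ℂ) - (Real.pi : ℂ) * Complex.I)) *
      Complex.exp ((1/2 : ℂ) * (Real.log (1 + x) : ℂ))
      = -(Complex.I * (Real.sqrt (1 - x^2) : ℂ)) := by
    rw [sub_eq_add_neg, mul_add, Complex.exp_add, exp_half_log _ (by linarith),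
      exp_half_log _ (by linarith), exp_neg_half_pi_I, ← sqrt_mul_sqrt hx0 hx1]
    push_cast; ring
  rw [heq] at this
  exact this.congr (fun z => rfl)

lemma gg_tendsto_aux {x : ℝ} (hx0 : 0 < x) (hx1 : x < 1) (χ τ : ℝ) (F : Filter ℂ)
    (hF : F ≤ 𝓝 (x:ℂ)) (σ : ℝ) (hσ : σ = 1 ∨ σ = -1)
    (hrr : Tendsto rr F (𝓝 ((σ:ℂ) * Complex.I * (Real.sqrt (1 - x^2) : ℂ)))) :
    Tendsto (gg χ τ) F
      (𝓝 ((σ:ℂ) * Complex.I * (Real.sqrt (1 - x^2) : ℂ) / 4 -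
        (Complex.I * (χ:ℂ) / (τ:ℂ)) *
          (Real.log (x / (1 - σ * Real.sqrt (1 - x^2))) : ℂ))) := by
  set s := Real.sqrt (1 - x^2) with hs
  have hs0 : 0 ≤ s := Real.sqrt_nonneg _
  have hs2 : s^2 = 1 - x^2 := Real.sq_sqrt (by nlinarith)
  have hslt : s < 1 := by nlinarith
  have hden : (0:ℝ) < 1 - σ * s := by rcases hσ with h | h <;> rw [h] <;> nlinarith
  have hpos : (0:ℝ) < x / (1 - σ * s) := div_pos hx0 hden
  have hdenC : Tendsto (fun z : ℂ => 1 + Complex.I * rr z) F (𝓝 (((1 - σ * s : ℝ)):ℂ)) := by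
    have := (tendsto_const_nhds (x := (1:ℂ)) (f := F)).add (hrr.const_mul Complex.I)
    have he : (1:ℂ) + Complex.I * ((σ:ℂ) * Complex.I * (s:ℂ)) = ((1 - σ * s : ℝ):ℂ) := by
      push_cast
      rw [show Complex.I * ((σ:ℂ) * Complex.I * (s:ℂ))
        = Complex.I^2 * ((σ:ℂ) * (s:ℂ)) by ring, Complex.I_sq]
      ring
    rwa [he] at this
  have hid : Tendsto (fun z : ℂ => z) F (𝓝 (x:ℂ)) := hF
  have hDD : Tendsto DD F (𝓝 ((x / (1 - σ * s) : ℝ):ℂ)) := by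
    have := hid.div hdenC (by
      simpa using Complex.ofReal_ne_zero.2 hden.ne')
    rw [Complex.ofReal_div]; exact this
  have hlog : Tendsto (fun z => Complex.log (DD z)) F
      (𝓝 ((Real.log (x / (1 - σ * s)) : ℂ))) := by
    have hc : ContinuousAt Complex.log ((x / (1 - σ * s) : ℝ):ℂ) := by
      apply continuousAt_clog
      apply Complex.mem_slitPlane_iff.2
      left
      rw [Complex.ofReal_re]
      exact hpos
    have := hc.tendsto.comp hDD
    rwa [← Complex.ofReal_log hpos.le] at this
  exact (hrr.div_const 4).sub (hlog.const_mul _)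

lemma one_le_ratio {x : ℝ} (hx0 : 0 < x) (hx1 : x < 1) :
    1 ≤ x / (1 - Real.sqrt (1 - x^2)) := by
  set s := Real.sqrt (1 - x^2) with hs
  have hs0 : 0 ≤ s := Real.sqrt_nonneg _
  have hs2 : s^2 = 1 - x^2 := Real.sq_sqrt (by nlinarith)
  have hslt : s < 1 := by nlinarith
  rw [le_div_iff₀ (by linarith)]
  have h1 : 1 - x ≤ s := by
    rw [show (1 - x : ℝ) = Real.sqrt ((1-x)^2) from (Real.sqrt_sq (by linarith)).symm]
    exact Real.sqrt_le_sqrt (by nlinarith)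
  linarith

theorem stmt8 (α χ τ : ℝ) (hα : -(1 / 2) < α) (hχ : 0 ≤ χ) (hτ : 1 < τ)
    (t : ℂ) (ht : t = -Complex.I * (τ : ℂ))
    (ν : ℝ) (hν : ν = τ / 2 - (χ + α) * Real.log τ) :
    (∀ x ∈ Set.Ioo (0 : ℝ) 1, ∃ gp gm : ℂ,
      Tendsto (fun ε : ℝ => gg χ τ ((x : ℂ) + (ε : ℂ) * Complex.I)) (𝓝[>] 0) (𝓝 gp) ∧
      Tendsto (fun ε : ℝ => gg χ τ ((x : ℂ) - (ε : ℂ) * Complex.I)) (𝓝[>] 0) (𝓝 gm) ∧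
      t * (gp - gm) =
        (((τ / 2) * Real.sqrt (1 - x ^ 2)
          - 2 * χ * Real.log (x / (1 - Real.sqrt (1 - x ^ 2))) : ℝ) : ℂ) ∧
      (Real.exp (-ν) : ℂ) * Complex.exp (t * (gp - gm)) =
        ((Real.exp (-(τ / 2) * (1 - Real.sqrt (1 - x ^ 2)))
          * τ ^ (χ + α)
          * (x / (1 - Real.sqrt (1 - x ^ 2))) ^ (-(2 * χ)) : ℝ) : ℂ)) ∧
    (∀ x ∈ Set.Ioo (0 : ℝ) 1, 1 ≤ x / (1 - Real.sqrt (1 - x ^ 2))) ∧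
    (∀ δ ∈ Set.Ioo (0 : ℝ) 1, ∀ x ∈ Set.Ico δ 1,
      Real.exp (-(τ / 2) * (1 - Real.sqrt (1 - x ^ 2)))
          * τ ^ (χ + α)
          * (x / (1 - Real.sqrt (1 - x ^ 2))) ^ (-(2 * χ))
        ≤ τ ^ (χ + α) * Real.exp (-(τ / 2) * (1 - Real.sqrt (1 - δ ^ 2)))) ∧
    (∀ δ ∈ Set.Ioo (0 : ℝ) 1,
      Tendsto (fun τ' : ℝ =>
          τ' ^ (χ + α) * Real.exp (-(τ' / 2) * (1 - Real.sqrt (1 - δ ^ 2))))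
        atTop (𝓝 0)) := by
  have hτ0 : (0:ℝ) < τ := by linarith
  refine ⟨?_, fun x hx => one_le_ratio hx.1 hx.2, ?_, ?_⟩
  · rintro x ⟨hx0, hx1⟩
    set s := Real.sqrt (1 - x^2) with hs
    have hs0 : 0 ≤ s := Real.sqrt_nonneg _
    have hs2 : s^2 = 1 - x^2 := Real.sq_sqrt (by nlinarith)
    have hslt : s < 1 := by nlinarith
    have hden : (0:ℝ) < 1 - s := by linarith
    have hpos : (0:ℝ) < x / (1 - s) := div_pos hx0 hden
    have hL : Real.log (x / (1 - (-1) * s)) = -Real.log (x / (1 - s)) := by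
      rw [← Real.log_inv, inv_div]
      congr 1
      rw [div_eq_div_iff (by linarith) (by linarith)]
      nlinarith
    have key : t * (((1:ℝ):ℂ) * Complex.I * (s:ℂ) / 4 -
        (Complex.I * (χ:ℂ) / (τ:ℂ)) * (Real.log (x / (1 - 1 * s)) : ℂ) -
        ((((-1:ℝ)):ℂ) * Complex.I * (s:ℂ) / 4 -
        (Complex.I * (χ:ℂ) / (τ:ℂ)) * (Real.log (x / (1 - (-1) * s)) : ℂ))) =
        (((τ / 2) * s - 2 * χ * Real.log (x / (1 - s)) : ℝ) : ℂ) := by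
      rw [hL, ht, one_mul]
      have hτne : (τ:ℂ) ≠ 0 := Complex.ofReal_ne_zero.2 hτ0.ne'
      push_cast
      field_simp
      ring_nf
      rw [Complex.I_sq]
      ring
    refine ⟨((1:ℝ):ℂ) * Complex.I * (s:ℂ) / 4 -
        (Complex.I * (χ:ℂ) / (τ:ℂ)) * (Real.log (x / (1 - 1 * s)) : ℂ),
      (((-1:ℝ)):ℂ) * Complex.I * (s:ℂ) / 4 -
        (Complex.I * (χ:ℂ) / (τ:ℂ)) * (Real.log (x / (1 - (-1) * s)) : ℂ),
      ?_, ?_, ?_, ?_⟩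
    · -- upper limit
      have hup : Tendsto (fun ε : ℝ => (x:ℂ) + (ε:ℂ) * Complex.I) (𝓝[>] (0:ℝ))
          (𝓝[{z : ℂ | 0 ≤ z.im}] (x:ℂ)) := by
        apply tendsto_nhdsWithin_of_tendsto_nhds_of_eventually_within
        · have : Tendsto (fun ε : ℝ => (x:ℂ) + (ε:ℂ) * Complex.I) (𝓝 (0:ℝ))
              (𝓝 ((x:ℂ) + ((0:ℝ):ℂ) * Complex.I)) :=
            Continuous.tendsto (by continuity) 0
          simpa using this.mono_left nhdsWithin_le_nhds
        · filter_upwards [self_mem_nhdsWithin] with ε hε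
          show (0:ℝ) ≤ ((x:ℂ) + (ε:ℂ) * Complex.I).im
          simpa using hε.le
      have hU := gg_tendsto_aux hx0 hx1 χ τ (𝓝[{z : ℂ | 0 ≤ z.im}] (x:ℂ))
        nhdsWithin_le_nhds 1 (Or.inl rfl) (by simpa using rr_tendsto_upper hx0 hx1)
      exact (hU.comp hup).congr (fun ε => rfl)
    · -- lower limit
      have hlo : Tendsto (fun ε : ℝ => (x:ℂ) - (ε:ℂ) * Complex.I) (𝓝[>] (0:ℝ))
          (𝓝[{z : ℂ | z.im < 0}] (x:ℂ)) := by
        apply tendsto_nhdsWithin_of_tendsto_nhds_of_eventually_within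
        · have : Tendsto (fun ε : ℝ => (x:ℂ) - (ε:ℂ) * Complex.I) (𝓝 (0:ℝ))
              (𝓝 ((x:ℂ) - ((0:ℝ):ℂ) * Complex.I)) :=
            Continuous.tendsto (by continuity) 0
          simpa using this.mono_left nhdsWithin_le_nhds
        · filter_upwards [self_mem_nhdsWithin] with ε hε
          show ((x:ℂ) - (ε:ℂ) * Complex.I).im < 0
          simpa using hε
      have hLo := gg_tendsto_aux hx0 hx1 χ τ (𝓝[{z : ℂ | z.im < 0}] (x:ℂ))
        nhdsWithin_le_nhds (-1) (Or.inr rfl) (by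
          have := rr_tendsto_lower hx0 hx1
          convert this using 2
          push_cast; ring)
      exact (hLo.comp hlo).congr (fun ε => rfl)
    · -- t (gp - gm)
      exact key
    · -- exponential identity
      rw [key, ← Complex.ofReal_exp, ← Complex.ofReal_mul]
      congr 1
      rw [← Real.exp_add, Real.rpow_def_of_pos hτ0, Real.rpow_def_of_pos hpos,
        ← Real.exp_add, ← Real.exp_add]
      congr 1
      rw [hν]
      ring
  · -- third bullet
    rintro δ ⟨hδ0, hδ1⟩ x ⟨hδx, hx1⟩
    have hx0 : 0 < x := lt_of_lt_of_le hδ0 hδx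
    set sx := Real.sqrt (1 - x^2) with hsx
    set sδ := Real.sqrt (1 - δ^2) with hsδ
    have h1 : (x / (1 - sx)) ^ (-(2*χ)) ≤ 1 :=
      Real.rpow_le_one_of_one_le_of_nonpos (one_le_ratio hx0 hx1) (by linarith)
    have hsle : sx ≤ sδ := Real.sqrt_le_sqrt (by nlinarith)
    have h2 : Real.exp (-(τ/2) * (1 - sx)) ≤ Real.exp (-(τ/2) * (1 - sδ)) :=
      Real.exp_le_exp.2 (by nlinarith)
    have hA : 0 ≤ Real.exp (-(τ/2) * (1 - sx)) * τ ^ (χ + α) :=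
      mul_nonneg (Real.exp_nonneg _) (Real.rpow_nonneg hτ0.le _)
    calc Real.exp (-(τ/2) * (1 - sx)) * τ ^ (χ + α) * (x / (1 - sx)) ^ (-(2*χ))
        ≤ Real.exp (-(τ/2) * (1 - sx)) * τ ^ (χ + α) * 1 :=
          mul_le_mul_of_nonneg_left h1 hA
      _ = τ ^ (χ + α) * Real.exp (-(τ/2) * (1 - sx)) := by ring
      _ ≤ τ ^ (χ + α) * Real.exp (-(τ/2) * (1 - sδ)) :=
          mul_le_mul_of_nonneg_left h2 (Real.rpow_nonneg hτ0.le _)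
  · -- fourth bullet
    rintro δ ⟨hδ0, hδ1⟩
    have hslt : Real.sqrt (1 - δ^2) < 1 := by
      have h := Real.sqrt_lt_sqrt (show (0:ℝ) ≤ 1 - δ^2 by nlinarith)
        (show 1 - δ^2 < 1 by nlinarith)
      rwa [Real.sqrt_one] at h
    have hb : 0 < (1 - Real.sqrt (1 - δ^2)) / 2 := by linarith
    have := tendsto_rpow_mul_exp_neg_mul_atTop_nhds_zero (χ + α) _ hb
    refine this.congr (fun τ' => ?_)
    congr 1
    congr 1
    ring
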